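/- For every integer n ≥ 2, there exists an extended 1-perfect trade of length n if and only if n is even. -/

import Mathlib

/-!
Necessity: fix `y ∈ T₀`. Each of the `n` neighbours `z` of `y` has odd weight, so it has exactly
one neighbour in `T₁`. Counting the pairs `(z, y')` with `y' ∈ T₁` and `z` adjacent to both `y`
and `y'` the other way round, each `y'` contributes the number of common neighbours of `y` and
`y'`, which is even since `z ↦ y + y' - z` pairs them off without fixed points. Hence `n` is even.

Sufficiency: for `n = 2m` double each word `s` of length `m` to `(s, s)`, and let `T₀`, `T₁` be
the doubles of the even and odd words. A word `x = (u, v)` is at distance `1` from some double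
only if `u` and `v` differ in exactly one position `k`; its doubled neighbours are then the doubles
of the two words that agree with `u` off `k`, and exactly one of these two words is even.
-/

open Finset Function

/-- An extended 1-perfect trade of length `n`. -/
def IsExtTrade {n : ℕ} (T₀ T₁ : Finset (Fin n → ZMod 2)) : Prop :=
  T₀.Nonempty ∧ T₁.Nonempty ∧ Disjoint T₀ T₁ ∧
  (∀ x ∈ T₀ ∪ T₁, Even (hammingNorm x)) ∧
  ∀ x : Fin n → ZMod 2, Odd (hammingNorm x) →
    (T₀.filter fun y => hammingDist x y = 1).card =
      (T₁.filter fun y => hammingDist x y = 1).card ∧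
    (T₀.filter fun y => hammingDist x y = 1).card ≤ 1

theorem Finset.even_card_of_involution {α : Type*} {s : Finset α} (g : α → α)
    (hg : ∀ a ∈ s, g a ≠ a) (g_mem : ∀ a ∈ s, g a ∈ s) (hgg : ∀ a ∈ s, g (g a) = a) :
    Even #s := by
  rw [← ZMod.natCast_eq_zero_iff_even, cast_card]
  exact sum_involution (fun a _ ↦ g a) (fun _ _ ↦ by decide) (fun a ha _ ↦ hg a ha) g_mem hgg

variable {ι κ : Type*}

def doubling {α : Type*} : (ι → α) ↪ (ι ⊕ ι → α) :=
  ⟨fun s ↦ Sum.elim s s, fun _ _ h ↦ funext fun i ↦ congrFun h (.inl i)⟩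

variable [Fintype ι]

def IsExtendedTrade (T₀ T₁ : Finset (ι → ZMod 2)) : Prop :=
  T₀.Nonempty ∧ T₁.Nonempty ∧ Disjoint T₀ T₁ ∧
  (∀ x ∈ T₀ ∪ T₁, Even (hammingNorm x)) ∧
  ∀ x : ι → ZMod 2, Odd (hammingNorm x) →
    (T₀.filter fun y => hammingDist x y = 1).card =
      (T₁.filter fun y => hammingDist x y = 1).card ∧
    (T₀.filter fun y => hammingDist x y = 1).card ≤ 1

theorem isExtTrade_iff_isExtendedTrade {n : ℕ} {T₀ T₁ : Finset (Fin n → ZMod 2)} :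
    IsExtTrade T₀ T₁ ↔ IsExtendedTrade T₀ T₁ :=
  Iff.rfl

section Parity

theorem natCast_hammingNorm_eq_sum (x : ι → ZMod 2) : (hammingNorm x : ZMod 2) = ∑ i, x i := by
  rw [hammingNorm, natCast_card_filter]
  exact sum_congr rfl fun i _ ↦ by generalize x i = a; revert a; decide

theorem even_hammingNorm_iff_sum_eq_zero {x : ι → ZMod 2} :
    Even (hammingNorm x) ↔ ∑ i, x i = 0 := by
  rw [← ZMod.natCast_eq_zero_iff_even, natCast_hammingNorm_eq_sum]

theorem odd_hammingNorm_iff_sum_eq_one {x : ι → ZMod 2} :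
    Odd (hammingNorm x) ↔ ∑ i, x i = 1 := by
  rw [← ZMod.natCast_eq_one_iff_odd, natCast_hammingNorm_eq_sum]

theorem odd_hammingNorm_of_hammingDist_eq_one {y z : ι → ZMod 2} (hy : Even (hammingNorm y))
    (hz : hammingDist z y = 1) : Odd (hammingNorm z) := by
  have := congrArg (Nat.cast : ℕ → ZMod 2) hz
  rw [even_hammingNorm_iff_sum_eq_zero] at hy
  rw [hammingDist_comm, hammingDist_eq_hammingNorm, natCast_hammingNorm_eq_sum] at this
  simp only [Pi.add_apply, Pi.neg_apply, sum_add_distrib, sum_neg_distrib, hy, neg_zero,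
    zero_add] at this
  exact odd_hammingNorm_iff_sum_eq_one.2 this

end Parity

section Neighbours

variable [DecidableEq ι]

theorem hammingNorm_eq_one_iff {w : ι → ZMod 2} : hammingNorm w = 1 ↔ ∃ i, w = Pi.single i 1 := by
  constructor
  · intro h
    obtain ⟨i, hi⟩ := card_eq_one.1 h
    refine ⟨i, funext fun j ↦ ?_⟩
    have hj : w j ≠ 0 ↔ j = i := by simpa using Finset.ext_iff.1 hi j
    rcases eq_or_ne j i with rfl | hji
    · rw [Pi.single_eq_same]
      have hwj := hj.2 rfl
      generalize w j = a at hwj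
      revert a; decide
    · simpa [hji] using hj
  · rintro ⟨i, rfl⟩
    rw [hammingNorm, card_eq_one]
    exact ⟨i, by ext j; by_cases j = i <;> simp_all⟩

theorem card_hammingDist_eq_one (y : ι → ZMod 2) :
    #{z | hammingDist z y = 1} = Fintype.card ι := by
  have hsphere : ({z | hammingDist z y = 1} : Finset _) = univ.image fun i ↦ y + Pi.single i 1 := by
    ext z
    rw [mem_filter_univ, hammingDist_comm, hammingDist_eq_hammingNorm, hammingNorm_eq_one_iff,
      mem_image]
    simp only [mem_univ, true_and, neg_add_eq_iff_eq_add]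
    exact exists_congr fun _ ↦ eq_comm
  have hinj : Injective fun i : ι ↦ y + Pi.single i (1 : ZMod 2) := fun i j h ↦ by
    simpa [Pi.single_apply] using congrFun (add_left_cancel h) i
  rw [hsphere, card_image_of_injective _ hinj, card_univ]

theorem even_card_commonNeighbors {y y' : ι → ZMod 2} (hne : y ≠ y') :
    Even #{z | hammingDist z y = 1 ∧ hammingDist z y' = 1} := by
  refine even_card_of_involution (fun z ↦ y + y' - z) (fun z _ h ↦ hne ?_) (fun z hz ↦ ?_)
    (fun z _ ↦ sub_sub_cancel _ _)
  · funext i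
    have := congrFun h i
    simp only [Pi.sub_apply, Pi.add_apply] at this
    generalize y i = a, y' i = b, z i = c at this
    revert a b c; decide
  · rw [mem_filter_univ] at hz ⊢
    rw [hammingDist_comm, hammingDist_comm _ y', hammingDist_eq_hammingNorm,
      hammingDist_eq_hammingNorm, show -y + (y + y' - z) = -z + y' by abel,
      show -y' + (y + y' - z) = -z + y by abel, ← hammingDist_eq_hammingNorm,
      ← hammingDist_eq_hammingNorm]
    exact hz.symm

end Neighbours

theorem IsExtendedTrade.even_card {T₀ T₁ : Finset (ι → ZMod 2)} (h : IsExtendedTrade T₀ T₁) :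
    Even (Fintype.card ι) := by
  classical
  obtain ⟨⟨y, hy⟩, -, hdisj, heven, hbal⟩ := h
  let adj : (ι → ZMod 2) → (ι → ZMod 2) → Prop := fun z y' ↦ hammingDist z y' = 1
  let S : Finset (ι → ZMod 2) := {z | adj z y}
  have hS : ∀ z ∈ S, #(T₁.bipartiteAbove adj z) = 1 := fun z hz ↦ by
    have hzy : hammingDist z y = 1 := (mem_filter.1 hz).2
    obtain ⟨hcard, hle⟩ :=
      hbal z (odd_hammingNorm_of_hammingDist_eq_one (heven y (mem_union_left _ hy)) hzy)
    have hpos : 0 < #(T₀.filter fun y' ↦ hammingDist z y' = 1) :=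
      card_pos.2 ⟨y, mem_filter.2 ⟨hy, hzy⟩⟩
    change #(T₁.filter fun y' ↦ hammingDist z y' = 1) = 1
    omega
  have hT : ∀ y' ∈ T₁, Even #(S.bipartiteBelow adj y') := fun y' hy' ↦ by
    rw [bipartiteBelow, filter_filter]
    exact even_card_commonNeighbors (disjoint_left.1 hdisj hy <| · ▸ hy')
  have hcount : Fintype.card ι = ∑ y' ∈ T₁, #(S.bipartiteBelow adj y') := calc
    Fintype.card ι = ∑ z ∈ S, #(T₁.bipartiteAbove adj z) := by
      rw [sum_congr rfl hS, ← card_eq_sum_ones, card_hammingDist_eq_one]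
    _ = ∑ y' ∈ T₁, #(S.bipartiteBelow adj y') :=
      sum_card_bipartiteAbove_eq_sum_card_bipartiteBelow _
  exact hcount ▸ even_sum _ hT

section Doubling

theorem hammingDist_sumElim_self (x : ι ⊕ ι → ZMod 2) (s : ι → ZMod 2) :
    hammingDist x (Sum.elim s s) = #{k | x (.inl k) ≠ x (.inr k)} +
      2 * #{k | x (.inl k) = x (.inr k) ∧ s k ≠ x (.inl k)} := by
  simp only [hammingDist, card_filter, Fintype.sum_sum_type, Sum.elim_inl, Sum.elim_inr,
    mul_sum, ← sum_add_distrib]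
  refine sum_congr rfl fun k _ ↦ ?_
  have key : ∀ a b c : ZMod 2, ((if a ≠ c then 1 else 0) + if b ≠ c then 1 else 0) =
      (if a ≠ b then 1 else 0) + 2 * if a = b ∧ c ≠ a then 1 else 0 := by decide
  exact key _ _ _

theorem hammingDist_sumElim_self_eq_one_iff (x : ι ⊕ ι → ZMod 2) (s : ι → ZMod 2) :
    hammingDist x (Sum.elim s s) = 1 ↔
      #{k | x (.inl k) ≠ x (.inr k)} = 1 ∧ ∀ k, x (.inl k) = x (.inr k) → s k = x (.inl k) := by
  have hagree : #{k | x (.inl k) = x (.inr k) ∧ s k ≠ x (.inl k)} = 0 ↔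
      ∀ k, x (.inl k) = x (.inr k) → s k = x (.inl k) := by
    simp [card_eq_zero, filter_eq_empty_iff]
  rw [hammingDist_sumElim_self, ← hagree]
  omega

variable [DecidableEq ι]

theorem card_sum_eq_and_forall_ne_eq {R : Type*} [AddCommGroup R] [Fintype R] [DecidableEq R]
    (k₀ : ι) (x : ι → R) (a : R) :
    #{s : ι → R | ∑ i, s i = a ∧ ∀ k ≠ k₀, s k = x k} = 1 := by
  rw [card_eq_one]
  refine ⟨update x k₀ (a - ∑ k ∈ univ.erase k₀, x k), ?_⟩
  ext s
  simp only [mem_filter_univ, mem_singleton, eq_update_iff]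
  constructor
  · rintro ⟨hsum, hs⟩
    refine ⟨?_, hs⟩
    rw [← hsum, ← add_sum_erase _ _ (mem_univ k₀),
      sum_congr rfl fun k hk ↦ hs k (ne_of_mem_erase hk)]
    abel
  · rintro ⟨hk₀, hs⟩
    refine ⟨?_, hs⟩
    rw [← add_sum_erase _ _ (mem_univ k₀), sum_congr rfl fun k hk ↦ hs k (ne_of_mem_erase hk),
      hk₀]
    abel

theorem card_sum_eq_and_hammingDist_sumElim_self_eq_one (x : ι ⊕ ι → ZMod 2) (a : ZMod 2) :
    #{s : ι → ZMod 2 | ∑ i, s i = a ∧ hammingDist x (Sum.elim s s) = 1} =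
      if #{k | x (.inl k) ≠ x (.inr k)} = 1 then 1 else 0 := by
  split_ifs with hD
  · obtain ⟨k₀, hk₀⟩ := card_eq_one.1 hD
    have hx : ∀ k, x (.inl k) = x (.inr k) ↔ k ≠ k₀ := fun k ↦ by
      simpa using (Finset.ext_iff.1 hk₀ k).not
    calc _ = #{s : ι → ZMod 2 | ∑ i, s i = a ∧ ∀ k ≠ k₀, s k = x (.inl k)} :=
          congrArg card <| filter_congr fun s _ ↦ by
            simp only [hammingDist_sumElim_self_eq_one_iff, hD, true_and, hx]
      _ = 1 := card_sum_eq_and_forall_ne_eq k₀ _ a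
  · rw [card_eq_zero, filter_eq_empty_iff]
    exact fun s _ h ↦ hD ((hammingDist_sumElim_self_eq_one_iff x s).1 h.2).1

def doubledWords (a : ZMod 2) : Finset (ι ⊕ ι → ZMod 2) :=
  ({s : ι → ZMod 2 | ∑ i, s i = a} : Finset _).map doubling

theorem isExtendedTrade_doubledWords [Nonempty ι] :
    IsExtendedTrade (doubledWords (ι := ι) 0) (doubledWords 1) := by
  obtain ⟨k⟩ := ‹Nonempty ι›
  refine ⟨⟨_, mem_map_of_mem _ ((mem_filter_univ _).2 (sum_const_zero (s := univ)))⟩,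
    ⟨_, mem_map_of_mem _ ((mem_filter_univ _).2 (Fintype.sum_pi_single' k 1))⟩,
    (disjoint_map _).2 (disjoint_filter.2 fun _ _ h₀ h₁ ↦ zero_ne_one (h₀.symm.trans h₁)),
    fun x hx ↦ ?_, fun x _ ↦ ?_⟩
  · rw [doubledWords, doubledWords, ← map_union] at hx
    obtain ⟨s, -, rfl⟩ := mem_map.1 hx
    rw [even_hammingNorm_iff_sum_eq_zero, Fintype.sum_sum_type]
    exact CharTwo.add_self_eq_zero _
  · have hcount (a : ZMod 2) : #((doubledWords a).filter fun y ↦ hammingDist x y = 1) =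
        if #{k | x (.inl k) ≠ x (.inr k)} = 1 then 1 else 0 := by
      rw [← card_sum_eq_and_hammingDist_sumElim_self_eq_one x a, doubledWords, filter_map,
        card_map, filter_filter]
      rfl
    rw [hcount, hcount]
    split_ifs <;> simp

end Doubling

section Reindexing

variable [Fintype κ]

theorem hammingDist_arrowCongr {β : Type*} [DecidableEq β] (e : ι ≃ κ) (x y : ι → β) :
    hammingDist (e.arrowCongr (.refl β) x) (e.arrowCongr (.refl β) y) = hammingDist x y :=
  card_equiv e.symm (by simp)

theorem IsExtendedTrade.arrowCongr {T₀ T₁ : Finset (ι → ZMod 2)} (e : ι ≃ κ)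
    (h : IsExtendedTrade T₀ T₁) :
    IsExtendedTrade (T₀.map (e.arrowCongr (.refl _)).toEmbedding)
      (T₁.map (e.arrowCongr (.refl _)).toEmbedding) := by
  set φ := e.arrowCongr (.refl (ZMod 2))
  have hdist (x y : ι → ZMod 2) : hammingDist (φ x) (φ y) = hammingDist x y :=
    hammingDist_arrowCongr e x y
  have hnorm (x : ι → ZMod 2) : hammingNorm (φ x) = hammingNorm x := by
    rw [← hammingDist_zero_right, ← hammingDist_zero_right, ← hdist x 0]
    rfl
  obtain ⟨h₀, h₁, hdisj, heven, hbal⟩ := h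
  refine ⟨h₀.map, h₁.map, (disjoint_map _).2 hdisj, fun x hx ↦ ?_, fun x hx ↦ ?_⟩
  · rw [← map_union] at hx
    obtain ⟨x, hxT, rfl⟩ := mem_map.1 hx
    rw [Equiv.coe_toEmbedding, hnorm]
    exact heven x hxT
  · obtain ⟨x, rfl⟩ := φ.surjective x
    simp only [filter_map, card_map, comp_def, Equiv.coe_toEmbedding, hdist]
    exact hbal x (hnorm x ▸ hx)

end Reindexing

/-- for n ≥ 2, an extended 1-perfect trade of length n exists iff
n is even. -/
theorem stmt_15 (n : ℕ) (hn : 2 ≤ n) :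
    (∃ T₀ T₁ : Finset (Fin n → ZMod 2), IsExtTrade T₀ T₁) ↔ Even n := by
  constructor
  · rintro ⟨T₀, T₁, h⟩
    simpa using (isExtTrade_iff_isExtendedTrade.1 h).even_card
  · rintro ⟨m, rfl⟩
    have : Nonempty (Fin m) := ⟨⟨0, by omega⟩⟩
    exact ⟨_, _, isExtTrade_iff_isExtendedTrade.2
      (isExtendedTrade_doubledWords.arrowCongr finSumFinEquiv)⟩
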